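/- arXiv:2105.14648 — 4 statements merged into one kernel-verified Lean document; each statement's English description precedes it below -/
import Mathlib

section
/- Let p ∈ (1, 2), ε = p - 1 ∈ (0, 1), and suppose nonnegative reals e_1,...,e_m, d_1,...,d_m satisfy d_i > 0 whenever e_i > 0, ∑ e_i²/d_i ≤ 1, and ∑ d_i^(p/(2-p)) ≤ 1 + 1/(2^(p/(2-p)) - 2). Then there is an absolute constant K (independent of m, p) with ∑_{i=1}^m e_i^p ≤ K·ε^(-1/2). -/
theorem stmt7 : ∃ K : ℝ, 0 < K ∧ ∀ (p ε : ℝ), p ∈ Set.Ioo (1:ℝ) 2 → ε = p - 1 →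
    ∀ (m : ℕ) (e d : Fin m → ℝ),
    (∀ i, 0 ≤ e i) → (∀ i, 0 ≤ d i) → (∀ i, 0 < e i → 0 < d i) →
    ∑ i, e i ^ 2 / d i ≤ 1 →
    ∑ i, d i ^ (p / (2 - p)) ≤ 1 + 1 / ((2:ℝ) ^ (p / (2 - p)) - 2) →
    ∑ i, e i ^ p ≤ K * ε ^ (-(1:ℝ)/2) := by
  refine ⟨2, by norm_num, ?_⟩
  rintro p ε ⟨hp1, hp2⟩ rfl m e d he hd hed hsum1 hsum2
  set q : ℝ := p / (2 - p) with hqdef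
  have h2p : 0 < 2 - p := by linarith
  have hε : 0 < p - 1 := by linarith
  have hε1 : p - 1 < 1 := by linarith
  have hp0 : 0 < p := by linarith
  -- q > 1
  have hq1 : 1 < q := by
    rw [hqdef, lt_div_iff₀ h2p]; linarith
  have hlog : (0.6931471803:ℝ) < Real.log 2 := Real.log_two_gt_d9
  -- 2^q - 2 ≥ p - 1
  have h2q : p - 1 ≤ (2:ℝ) ^ q - 2 := by
    have hq2 : (2:ℝ) ^ q = 2 * (2:ℝ) ^ (q - 1) := by
      rw [show q = (q - 1) + 1 by ring, Real.rpow_add (by norm_num : (0:ℝ) < 2),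
        Real.rpow_one]
      ring
    have hexp : 1 + (q - 1) * Real.log 2 ≤ (2:ℝ) ^ (q - 1) := by
      rw [Real.rpow_def_of_pos (by norm_num : (0:ℝ) < 2)]
      have := Real.add_one_le_exp (Real.log 2 * (q - 1))
      nlinarith
    have hq1' : 2 * (p - 1) ≤ q - 1 := by
      rw [hqdef]
      rw [div_sub' (ne_of_gt h2p), le_div_iff₀ h2p]
      nlinarith
    nlinarith
  have h2qpos : 0 < (2:ℝ) ^ q - 2 := by nlinarith
  -- ∑ d^q ≤ 2/(p-1)
  have hS : ∑ i, d i ^ q ≤ 2 / (p - 1) := by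
    have h1 : 1 / ((2:ℝ) ^ q - 2) ≤ 1 / (p - 1) :=
      one_div_le_one_div_of_le hε h2q
    have h2 : 1 + 1 / (p - 1) ≤ 2 / (p - 1) := by
      rw [le_div_iff₀ hε, add_mul, one_mul, div_mul_cancel₀ _ (ne_of_gt hε)]
      linarith
    calc ∑ i, d i ^ q ≤ 1 + 1 / ((2:ℝ) ^ q - 2) := hsum2
      _ ≤ 1 + 1 / (p - 1) := by linarith
      _ ≤ 2 / (p - 1) := h2
  -- Hölder
  have hconj : Real.HolderConjugate (2 / p) (2 / (2 - p)) := by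
    rw [Real.holderConjugate_iff]
    constructor
    · rw [lt_div_iff₀ hp0]; linarith
    · field_simp; ring
  set f : Fin m → ℝ := fun i => (e i ^ 2 / d i) ^ (p / 2) with hf
  set g : Fin m → ℝ := fun i => d i ^ (p / 2) with hg
  have hfnn : ∀ i, 0 ≤ f i := fun i =>
    Real.rpow_nonneg (div_nonneg (sq_nonneg _) (hd i)) _
  have hgnn : ∀ i, 0 ≤ g i := fun i => Real.rpow_nonneg (hd i) _
  have hkey : ∀ i, e i ^ p = f i * g i := by
    intro i
    rcases eq_or_lt_of_le (hd i) with hdi | hdi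
    · have hei : e i = 0 := by
        by_contra h
        have : 0 < e i := lt_of_le_of_ne (he i) (Ne.symm h)
        exact absurd (hed i this) (by rw [← hdi]; exact lt_irrefl 0)
      simp [hf, hg, hei, ← hdi, Real.zero_rpow (ne_of_gt hp0),
        Real.zero_rpow (ne_of_gt (by positivity : (0:ℝ) < p / 2))]
    · have : f i * g i = (e i ^ 2) ^ (p / 2) / d i ^ (p / 2) * d i ^ (p / 2) := by
        show (e i ^ 2 / d i) ^ (p / 2) * d i ^ (p / 2) = _
        rw [Real.div_rpow (sq_nonneg _) (le_of_lt hdi)]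
      rw [this, div_mul_cancel₀ _ (ne_of_gt (Real.rpow_pos_of_pos hdi _))]
      rw [← Real.rpow_natCast (e i) 2, ← Real.rpow_mul (he i),
        show ((2:ℕ):ℝ) * (p / 2) = p by push_cast; ring]
  have hholder := Real.inner_le_Lp_mul_Lq Finset.univ f g hconj
  have hfp : ∀ i, |f i| ^ (2 / p) = e i ^ 2 / d i := by
    intro i
    rw [abs_of_nonneg (hfnn i), hf, ← Real.rpow_mul (div_nonneg (sq_nonneg _) (hd i))]
    rw [show p / 2 * (2 / p) = 1 by field_simp]
    exact Real.rpow_one _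
  have hgq : ∀ i, |g i| ^ (2 / (2 - p)) = d i ^ q := by
    intro i
    rw [abs_of_nonneg (hgnn i), hg, ← Real.rpow_mul (hd i)]
    congr 1
    rw [hqdef]; field_simp
  simp only [hfp, hgq] at hholder
  have hEq : ∑ i, e i ^ p = ∑ i, f i * g i := Finset.sum_congr rfl fun i _ => hkey i
  rw [hEq]
  have hA : (∑ i, e i ^ 2 / d i) ^ (1 / (2/p)) ≤ 1 := by
    apply Real.rpow_le_one _ hsum1 (by positivity)
    exact Finset.sum_nonneg fun i _ => div_nonneg (sq_nonneg _) (hd i)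
  have hSnn : 0 ≤ ∑ i, d i ^ q := Finset.sum_nonneg fun i _ => Real.rpow_nonneg (hd i) _
  have hbase : (1:ℝ) ≤ 2 / (p - 1) := by
    rw [le_div_iff₀ hε]; linarith
  have hB : (∑ i, d i ^ q) ^ (1 / (2/(2-p))) ≤ 2 * (p - 1) ^ (-(1:ℝ)/2) := by
    have h1 : (∑ i, d i ^ q) ^ (1 / (2/(2-p))) ≤ (2 / (p - 1)) ^ (1 / (2/(2-p))) :=
      Real.rpow_le_rpow hSnn hS (by positivity)
    have h2 : (2 / (p - 1)) ^ (1 / (2/(2-p))) ≤ (2 / (p - 1)) ^ ((1:ℝ)/2) := by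
      apply Real.rpow_le_rpow_of_exponent_le hbase
      rw [one_div, one_div, inv_le_inv₀ (by positivity) (by norm_num)]
      rw [le_div_iff₀ h2p]; linarith
    have h3 : (2 / (p - 1)) ^ ((1:ℝ)/2) ≤ 2 * (p - 1) ^ (-(1:ℝ)/2) := by
      rw [Real.div_rpow (by norm_num) (le_of_lt hε)]
      rw [show -(1:ℝ)/2 = -(1/2) by ring, Real.rpow_neg (le_of_lt hε),
        ← div_eq_mul_inv]
      have h4 : (2:ℝ) ^ ((1:ℝ)/2) ≤ 2 := by
        calc (2:ℝ) ^ ((1:ℝ)/2) ≤ 2 ^ (1:ℝ) :=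
              Real.rpow_le_rpow_of_exponent_le (by norm_num) (by norm_num)
          _ = 2 := Real.rpow_one 2
      exact div_le_div₀ (by norm_num) h4 (Real.rpow_pos_of_pos hε _) le_rfl
    linarith
  calc ∑ i, f i * g i ≤ _ := hholder
    _ ≤ 1 * (2 * (p - 1) ^ (-(1:ℝ)/2)) := by
        apply mul_le_mul hA hB (Real.rpow_nonneg hSnn _) (by norm_num)
    _ = 2 * (p - 1) ^ (-(1:ℝ)/2) := by ring
end

section
/- There is an absolute constant c > 0 such that for all ε ∈ (0, 1/2), ∑_{k=1}^∞ 2^(k-2) · (√ε·(1-ε)^(k/2) / 2^(k+1))^(1+ε) ≥ c·ε^(-1/2). -/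
open Real

set_option maxHeartbeats 1000000 in
theorem stmt9 : ∃ c : ℝ, 0 < c ∧ ∀ ε : ℝ, ε ∈ Set.Ioo (0:ℝ) (1/2) →
    c * ε ^ (-(1:ℝ)/2) ≤
    ∑' k : ℕ, (2:ℝ) ^ (((k:ℝ) + 1) - 2) *
      (Real.sqrt ε * (1 - ε) ^ (((k:ℝ) + 1) / 2) / 2 ^ (((k:ℝ) + 1) + 1)) ^ (1 + ε) := by
  refine ⟨1/144, by norm_num, ?_⟩
  rintro ε ⟨hε0, hε2⟩
  have h1ε : (0:ℝ) < 1 - ε := by linarith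
  have hsε : 0 < Real.sqrt ε := Real.sqrt_pos.2 hε0
  have hs1ε : 0 < Real.sqrt (1-ε) := Real.sqrt_pos.2 h1ε
  set A : ℝ := Real.sqrt ε * Real.sqrt (1-ε) / 4 with hAdef
  have hA0 : 0 < A := by positivity
  set B : ℝ := Real.sqrt (1-ε) / 2 with hBdef
  have hB0 : 0 < B := by positivity
  set r : ℝ := 2 * B ^ (1+ε) with hrdef
  have hr0 : 0 < r := by positivity
  have h1e0 : (0:ℝ) ≤ 1 + ε := by linarith
  -- term equality
  have hterm : ∀ k : ℕ, (2:ℝ) ^ (((k:ℝ) + 1) - 2) *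
      (Real.sqrt ε * (1 - ε) ^ (((k:ℝ) + 1) / 2) / 2 ^ (((k:ℝ) + 1) + 1)) ^ (1 + ε)
      = (A ^ (1+ε) / 2) * r ^ k := by
    intro k
    have hX : Real.sqrt ε * (1 - ε) ^ (((k:ℝ) + 1) / 2) / 2 ^ (((k:ℝ) + 1) + 1)
        = A * B ^ k := by
      have h1 : (1 - ε) ^ (((k:ℝ) + 1) / 2) = Real.sqrt (1-ε) * (Real.sqrt (1-ε)) ^ k := by
        rw [show ((k:ℝ) + 1) / 2 = (1/2) * ((k:ℝ)+1) by ring, Real.rpow_mul h1ε.le,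
          ← Real.sqrt_eq_rpow, Real.rpow_add hs1ε, Real.rpow_one, Real.rpow_natCast]
        ring
      have h2 : (2:ℝ) ^ (((k:ℝ) + 1) + 1) = 4 * 2 ^ k := by
        rw [show ((k:ℝ) + 1) + 1 = (k:ℝ) + 2 by ring, Real.rpow_add two_pos,
          Real.rpow_natCast]
        norm_num; ring
      rw [h1, h2, hBdef, div_pow]
      field_simp
      ring
    have h3 : (2:ℝ) ^ (((k:ℝ) + 1) - 2) = 2 ^ k / 2 := by
      rw [show ((k:ℝ) + 1) - 2 = (k:ℝ) + (-1) by ring, Real.rpow_add two_pos,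
        Real.rpow_natCast, Real.rpow_neg_one]
      ring
    have h4 : (B ^ (k:ℕ)) ^ (1+ε) = (B ^ (1+ε)) ^ (k:ℕ) := by
      rw [← Real.rpow_natCast B k, ← Real.rpow_natCast (B ^ (1+ε)) k,
        ← Real.rpow_mul hB0.le, ← Real.rpow_mul hB0.le, mul_comm]
    rw [hX, h3, Real.mul_rpow hA0.le (by positivity), h4, hrdef, mul_pow]
    ring
  -- r expression and bounds
  have hrval : r = (1-ε) ^ ((1+ε)/2) * 2 ^ (-ε) := by
    rw [Real.rpow_neg (by norm_num : (0:ℝ) ≤ 2), hrdef, hBdef,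
      Real.div_rpow hs1ε.le (by norm_num), Real.sqrt_eq_rpow,
      ← Real.rpow_mul h1ε.le, Real.rpow_add two_pos, Real.rpow_one]
    ring_nf
  have hfac1 : 1 - ε ≤ (1-ε) ^ ((1+ε)/2) := by
    nth_rewrite 1 [show (1:ℝ) - ε = (1-ε) ^ (1:ℝ) by rw [Real.rpow_one]]
    exact Real.rpow_le_rpow_of_exponent_ge h1ε (by linarith) (by linarith)
  have hfac2 : 1 - ε ≤ (2:ℝ) ^ (-ε) := by
    rw [Real.rpow_def_of_pos two_pos]
    calc 1 - ε ≤ 1 + (Real.log 2 * (-ε)) := by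
          nlinarith [Real.log_two_lt_d9, Real.log_two_gt_d9]
      _ ≤ Real.exp (Real.log 2 * (-ε)) := by linarith [Real.add_one_le_exp (Real.log 2 * (-ε))]
  have hrlb : 1 - 2*ε ≤ r := by
    rw [hrval]
    nlinarith [mul_le_mul hfac1 hfac2 (by linarith : (0:ℝ) ≤ 1 - ε)
      (Real.rpow_nonneg h1ε.le ((1+ε)/2))]
  have hrlt : r < 1 := by
    rw [hrval]
    have h1 : (1-ε) ^ ((1+ε)/2) < 1 :=
      Real.rpow_lt_one h1ε.le (by linarith) (by linarith)
    have h2 : (2:ℝ) ^ (-ε) < 1 :=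
      Real.rpow_lt_one_of_one_lt_of_neg one_lt_two (by linarith)
    nlinarith [Real.rpow_nonneg h1ε.le ((1+ε)/2), Real.rpow_nonneg (le_of_lt two_pos) (-ε)]
  -- tsum
  have hsum : ∑' k : ℕ, (2:ℝ) ^ (((k:ℝ) + 1) - 2) *
      (Real.sqrt ε * (1 - ε) ^ (((k:ℝ) + 1) / 2) / 2 ^ (((k:ℝ) + 1) + 1)) ^ (1 + ε)
      = (A ^ (1+ε) / 2) * (1 - r)⁻¹ := by
    simp_rw [hterm]
    rw [tsum_mul_left, tsum_geometric_of_lt_one hr0.le hrlt]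
  rw [hsum]
  -- bound A^(1+ε)
  have hAlb : Real.sqrt ε / 36 ≤ A ^ (1+ε) := by
    have h1 : Real.sqrt ε / 6 ≤ A := by
      rw [hAdef]
      have : (2:ℝ)/3 ≤ Real.sqrt (1-ε) := by
        rw [show (2:ℝ)/3 = Real.sqrt ((2/3)^2) by rw [Real.sqrt_sq]; norm_num]
        exact Real.sqrt_le_sqrt (by nlinarith)
      nlinarith [hsε.le]
    calc Real.sqrt ε / 36 = (Real.sqrt ε / 6) * (1/2 * (1/3)) := by ring
      _ ≤ (Real.sqrt ε / 6) * ((Real.sqrt ε / 6) ^ (ε:ℝ)) := by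
          have hx : 0 < Real.sqrt ε / 6 := by positivity
          have hxε : (1:ℝ)/2 * (1/3) ≤ (Real.sqrt ε / 6) ^ (ε:ℝ) := by
            have h6 : (Real.sqrt ε / 6 : ℝ) ^ (ε:ℝ)
                = (Real.sqrt ε) ^ (ε:ℝ) * ((6:ℝ)⁻¹) ^ (ε:ℝ) := by
              rw [div_eq_mul_inv (Real.sqrt ε) 6, Real.mul_rpow hsε.le (by norm_num)]
            rw [h6]
            have ha : (1:ℝ)/2 ≤ (Real.sqrt ε) ^ (ε:ℝ) := by
              rw [Real.sqrt_eq_rpow, ← Real.rpow_mul hε0.le,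
                Real.rpow_def_of_pos hε0]
              have hlog : -1 ≤ ε * Real.log ε := by
                have := Real.add_one_le_exp (-Real.log ε)
                rw [Real.exp_neg, Real.exp_log hε0] at this
                have hε' : ε * (ε⁻¹) = 1 := mul_inv_cancel₀ hε0.ne'
                nlinarith [hε0.le]
              calc (1:ℝ)/2 ≤ 1 + Real.log ε * (1/2 * ε) := by nlinarith
                _ ≤ Real.exp (Real.log ε * (1/2 * ε)) :=
                    by linarith [Real.add_one_le_exp (Real.log ε * (1/2 * ε))]
            have hb : (1:ℝ)/3 ≤ ((6:ℝ)⁻¹) ^ (ε:ℝ) := by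
              calc (1:ℝ)/3 ≤ ((6:ℝ)⁻¹) ^ ((1:ℝ)/2) := by
                    rw [show ((6:ℝ)⁻¹) ^ ((1:ℝ)/2) = Real.sqrt (6⁻¹) by
                      rw [Real.sqrt_eq_rpow]]
                    rw [show (1:ℝ)/3 = Real.sqrt ((1/3)^2) by rw [Real.sqrt_sq]; norm_num]
                    exact Real.sqrt_le_sqrt (by norm_num)
                _ ≤ ((6:ℝ)⁻¹) ^ (ε:ℝ) :=
                    Real.rpow_le_rpow_of_exponent_ge (by norm_num) (by norm_num) (by linarith)
            exact mul_le_mul ha hb (by norm_num) (Real.rpow_nonneg hsε.le (ε:ℝ))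
          exact mul_le_mul_of_nonneg_left hxε hx.le
      _ = (Real.sqrt ε / 6) ^ (1 + ε) := by
          rw [Real.rpow_add (by positivity), Real.rpow_one]
      _ ≤ A ^ (1+ε) := Real.rpow_le_rpow (by positivity) h1 h1e0
  -- final
  have h1r : 0 < 1 - r := by linarith
  have h1rle : 1 - r ≤ 2 * ε := by linarith
  have hinv : (2*ε)⁻¹ ≤ (1-r)⁻¹ := by
    apply inv_anti₀ h1r h1rle
  have hεsqrt : ε ^ (-(1:ℝ)/2) = (Real.sqrt ε)⁻¹ := by
    rw [show (-(1:ℝ)/2) = -(1/2) by ring, Real.rpow_neg hε0.le, Real.sqrt_eq_rpow]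
  rw [hεsqrt]
  have hkey : 1/144 * (Real.sqrt ε)⁻¹ ≤ (Real.sqrt ε / 36 / 2) * (2*ε)⁻¹ := by
    have hss : Real.sqrt ε * Real.sqrt ε = ε := Real.mul_self_sqrt hε0.le
    have hne := hsε.ne'
    have heq : (Real.sqrt ε / 36 / 2) * (2*ε)⁻¹ = 1/144 * (Real.sqrt ε)⁻¹ := by
      field_simp
      nlinarith [hss]
    rw [heq]
  calc 1/144 * (Real.sqrt ε)⁻¹ ≤ (Real.sqrt ε / 36 / 2) * (2*ε)⁻¹ := hkey
    _ ≤ (A ^ (1+ε) / 2) * (1-r)⁻¹ := by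
        apply mul_le_mul (by linarith) hinv (by positivity) (by positivity)
end

section
/- Let u₁ < u₂ < ... < u_m be points in [0,1], let v₁,...,v_m be reals, and let f_S be the piecewise linear interpolant of S = {(u_i, v_i)} (constant to the left of u₁ and to the right of u_m). Let (x, y) ∈ [0,1] × ℝ, and suppose there is an index j with u_j < x < u_{j+1} and |x - u_j| = |x - u_{j+1}| = min_i |x - u_i| = d. Then J[f_{S ∪ {(x,y)}}] = J[f_S] + 2(y - f_S(x))²/d, where J[f] = ∫₀¹ f'(x)² dx. -/
open MeasureTheory

private lemma kl_ae_Ioo (a b : ℝ) :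
    ∀ᵐ t ∂(volume.restrict (Set.Ioc a b)), t ∈ Set.Ioo a b := by
  have h1 : ∀ᵐ t : ℝ, t ≠ b := by
    rw [MeasureTheory.ae_iff]
    simpa using Real.volume_singleton
  filter_upwards [MeasureTheory.ae_restrict_of_ae h1,
    MeasureTheory.ae_restrict_mem measurableSet_Ioc] with t ht hmem
  exact ⟨hmem.1, lt_of_le_of_ne hmem.2 ht⟩

private lemma kl_integral_congr {F G : ℝ → ℝ} {a b : ℝ} (hab : a ≤ b)
    (h : ∀ t ∈ Set.Ioo a b, F t = G t) :
    ∫ t in a..b, F t = ∫ t in a..b, G t := by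
  rw [intervalIntegral.integral_of_le hab, intervalIntegral.integral_of_le hab,
    MeasureTheory.integral_Ioc_eq_integral_Ioo, MeasureTheory.integral_Ioc_eq_integral_Ioo]
  exact MeasureTheory.setIntegral_congr_fun measurableSet_Ioo h

private lemma kl_integrable {F G : ℝ → ℝ} {a b : ℝ} (hab : a ≤ b)
    (hG : MeasureTheory.IntegrableOn G (Set.Ioc a b))
    (h : ∀ t ∈ Set.Ioo a b, F t = G t) :
    IntervalIntegrable F MeasureTheory.volume a b := by
  rw [intervalIntegrable_iff_integrableOn_Ioc_of_le hab]
  refine hG.congr ?_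
  filter_upwards [kl_ae_Ioo a b] with t ht
  exact (h t ht).symm

private lemma kl_integrable_const {F : ℝ → ℝ} {a b c : ℝ} (hab : a ≤ b)
    (h : ∀ t ∈ Set.Ioo a b, F t = c) :
    IntervalIntegrable F MeasureTheory.volume a b :=
  kl_integrable hab ((integrableOn_const_iff).mpr (Or.inr measure_Ioc_lt_top)) h

private lemma kl_integral_const {F : ℝ → ℝ} {a b c : ℝ} (hab : a ≤ b)
    (h : ∀ t ∈ Set.Ioo a b, F t = c) :
    ∫ t in a..b, F t = (b - a) * c := by
  rw [kl_integral_congr hab h, intervalIntegral.integral_const, smul_eq_mul]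

private lemma kl_deriv_affine (c p q r t : ℝ) :
    deriv (fun s => c + (s - p) * q / r) t = q / r := by
  have h1 : HasDerivAt (fun s : ℝ => s - p) 1 t := (hasDerivAt_id t).sub_const p
  have h2 := (h1.mul_const q).div_const r
  simpa using (h2.const_add c).deriv

private lemma kl_deriv_eq_on {f φ : ℝ → ℝ} {U : Set ℝ} (hU : IsOpen U)
    (h : ∀ s ∈ U, f s = φ s) {t : ℝ} (ht : t ∈ U) : deriv f t = deriv φ t :=
  Filter.EventuallyEq.deriv_eq (Filter.eventuallyEq_of_mem (hU.mem_nhds ht) h)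

/-- Kimber–Long lemma: inserting a point `(x, y)` equidistant (at distance `d`)
from its two neighboring interpolation nodes increases `J[f] = ∫₀¹ f'(t)² dt`
by `2 (y - f_S x)² / d`. The interpolants `f` (of `S`) and `g` (of `S ∪ {(x,y)}`)
are characterized by their defining piecewise-linear properties. -/
theorem stmt15 (m : ℕ) (hm : 1 ≤ m) (u v : Fin m → ℝ)
    (hu : StrictMono u) (hurange : ∀ i, u i ∈ Set.Icc (0:ℝ) 1)
    (f g : ℝ → ℝ)
    -- f interpolates S
    (hfval : ∀ i, f (u i) = v i)
    (hflo : ∀ t ≤ u ⟨0, hm⟩, f t = v ⟨0, hm⟩)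
    (hfhi : ∀ t, u ⟨m - 1, Nat.sub_lt hm one_pos⟩ ≤ t → f t = v ⟨m - 1, Nat.sub_lt hm one_pos⟩)
    (hflin : ∀ (i : Fin m) (h : (i : ℕ) + 1 < m), ∀ t ∈ Set.Ioc (u i) (u ⟨(i : ℕ) + 1, h⟩),
      f t = v i + (t - u i) * (v ⟨(i : ℕ) + 1, h⟩ - v i) / (u ⟨(i : ℕ) + 1, h⟩ - u i))
    -- the new point (x, y) and its neighbors u j, u (j+1)
    (x y d : ℝ) (hx : x ∈ Set.Icc (0:ℝ) 1)
    (j : Fin m) (hj : (j : ℕ) + 1 < m)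
    (hbetween : u j < x ∧ x < u ⟨(j : ℕ) + 1, hj⟩)
    (hdl : |x - u j| = d) (hdr : |x - u ⟨(j : ℕ) + 1, hj⟩| = d)
    (hdmin : ∀ i, d ≤ |x - u i|)
    -- g interpolates S ∪ {(x, y)}: it agrees with f off (u j, u (j+1)) and is
    -- linear on [u j, x] and [x, u (j+1)] through (u j, v j), (x, y), (u (j+1), v (j+1))
    (hgout : ∀ t, t ∉ Set.Ioo (u j) (u ⟨(j : ℕ) + 1, hj⟩) → g t = f t)
    (hgleft : ∀ t ∈ Set.Ioc (u j) x, g t = v j + (t - u j) * (y - v j) / (x - u j))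
    (hgright : ∀ t ∈ Set.Ioc x (u ⟨(j : ℕ) + 1, hj⟩),
      g t = y + (t - x) * (v ⟨(j : ℕ) + 1, hj⟩ - y) / (u ⟨(j : ℕ) + 1, hj⟩ - x)) :
    ∫ t in (0:ℝ)..1, (deriv g t) ^ 2
      = (∫ t in (0:ℝ)..1, (deriv f t) ^ 2) + 2 * (y - f x) ^ 2 / d := by
  classical
  have hmsub : m - 1 < m := Nat.sub_lt hm one_pos
  obtain ⟨hAx, hxB⟩ := hbetween
  have hAltB : u j < u ⟨(j : ℕ) + 1, hj⟩ := lt_trans hAx hxB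
  have hdx : x - u j = d := by
    rw [← hdl, abs_of_pos (by linarith)]
  have hBx : u ⟨(j : ℕ) + 1, hj⟩ - x = d := by
    rw [← hdr, abs_of_neg (by linarith)]; ring
  have hd : 0 < d := by linarith
  have hAB : u ⟨(j : ℕ) + 1, hj⟩ - u j = 2 * d := by linarith
  have hA0 : (0:ℝ) ≤ u j := (hurange j).1
  have hB1 : u ⟨(j : ℕ) + 1, hj⟩ ≤ 1 := (hurange _).2
  -- the uniform slope bound
  set C : ℝ := ∑ i : Fin m, ∑ k : Fin m, |(v k - v i) / (u k - u i)| with hC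
  have hC0 : 0 ≤ C :=
    Finset.sum_nonneg fun i _ => Finset.sum_nonneg fun k _ => abs_nonneg _
  have hCik : ∀ i k : Fin m, |(v k - v i) / (u k - u i)| ≤ C := by
    intro i k
    calc |(v k - v i) / (u k - u i)|
        ≤ ∑ k : Fin m, |(v k - v i) / (u k - u i)| :=
          Finset.single_le_sum (f := fun k => |(v k - v i) / (u k - u i)|)
            (fun k _ => abs_nonneg _) (Finset.mem_univ k)
      _ ≤ C :=
          Finset.single_le_sum (f := fun i => ∑ k : Fin m, |(v k - v i) / (u k - u i)|)
            (fun i _ => Finset.sum_nonneg fun k _ => abs_nonneg _) (Finset.mem_univ i)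
  -- locating a point off the nodes inside a piece
  have hpiece : ∀ t : ℝ, u ⟨0, hm⟩ < t → t < u ⟨m - 1, hmsub⟩ → (∀ i, t ≠ u i) →
      ∃ (i : Fin m) (h : (i : ℕ) + 1 < m), u i < t ∧ t < u ⟨(i : ℕ) + 1, h⟩ := by
    intro t h0 hlast hnode
    set T : Finset (Fin m) := Finset.univ.filter (fun i : Fin m => u i < t) with hT
    have hne : T.Nonempty := ⟨⟨0, hm⟩, by simp [hT, h0]⟩
    set i : Fin m := T.max' hne with hi
    have hiT : i ∈ T := T.max'_mem hne
    have hilt : u i < t := by simpa [hT] using hiT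
    have h : (i : ℕ) + 1 < m := by
      by_contra hcon
      have : i = ⟨m - 1, hmsub⟩ := Fin.ext (by simp only [Fin.val_mk]; have := i.isLt; omega)
      rw [this] at hilt; linarith
    refine ⟨i, h, hilt, ?_⟩
    by_contra hcon
    push_neg at hcon
    have hlt : u ⟨(i : ℕ) + 1, h⟩ < t :=
      lt_of_le_of_ne hcon (fun he => hnode _ he.symm)
    have hmem : (⟨(i : ℕ) + 1, h⟩ : Fin m) ∈ T := by simp [hT, hlt]
    have := T.le_max' _ hmem
    rw [← hi] at this
    exact absurd this (by simp [Fin.le_def])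
  -- the derivative bound off the nodes
  have hbound : ∀ t : ℝ, (∀ i, t ≠ u i) → |deriv f t| ≤ C := by
    intro t hnode
    by_cases h0 : t < u ⟨0, hm⟩
    · have hz : deriv f t = 0 := by
        rw [kl_deriv_eq_on (φ := fun _ => v ⟨0, hm⟩) isOpen_Iio
          (fun s hs => hflo s (le_of_lt hs)) h0]
        simp
      simpa [hz] using hC0
    by_cases h1 : u ⟨m - 1, hmsub⟩ < t
    · have hz : deriv f t = 0 := by
        rw [kl_deriv_eq_on (φ := fun _ => v ⟨m - 1, hmsub⟩) isOpen_Ioi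
          (fun s hs => hfhi s (le_of_lt hs)) h1]
        simp
      simpa [hz] using hC0
    push_neg at h0 h1
    have h0' : u ⟨0, hm⟩ < t := lt_of_le_of_ne h0 (fun he => hnode _ he.symm)
    have h1' : t < u ⟨m - 1, hmsub⟩ := lt_of_le_of_ne h1 (hnode _)
    obtain ⟨i, h, hl, hr⟩ := hpiece t h0' h1' hnode
    have hz : deriv f t = (v ⟨(i : ℕ) + 1, h⟩ - v i) / (u ⟨(i : ℕ) + 1, h⟩ - u i) := by
      rw [kl_deriv_eq_on isOpen_Ioo
        (fun s hs => hflin i h s ⟨hs.1, le_of_lt hs.2⟩) ⟨hl, hr⟩, kl_deriv_affine]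
    rw [hz]
    exact hCik i _
  -- integrability of (deriv f)^2 on (0,1]
  have hnodes_ae : ∀ᵐ t : ℝ, ∀ i, t ≠ u i := by
    have h0 : volume (Set.range u) = 0 := (Set.finite_range u).measure_zero _
    have h0' : ∀ᵐ t : ℝ, t ∉ Set.range u :=
      (MeasureTheory.measure_eq_zero_iff_ae_notMem (μ := volume)).mp h0
    filter_upwards [h0'] with t ht i hti
    exact ht ⟨i, hti.symm⟩
  have hFint : IntegrableOn (fun t => (deriv f t) ^ 2) (Set.Ioc (0:ℝ) 1) := by
    have hc : IntegrableOn (fun _ : ℝ => C ^ 2) (Set.Ioc (0:ℝ) 1) :=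
      (integrableOn_const_iff).mpr (Or.inr measure_Ioc_lt_top)
    refine hc.mono' ((measurable_deriv f).pow_const 2).aestronglyMeasurable ?_
    filter_upwards [MeasureTheory.ae_restrict_of_ae hnodes_ae] with t ht
    have hb := hbound t ht
    calc ‖(deriv f t) ^ 2‖ = |deriv f t| ^ 2 := by
          rw [Real.norm_eq_abs, abs_pow, sq_abs, ← sq_abs]
      _ ≤ C ^ 2 := pow_le_pow_left₀ (abs_nonneg _) hb 2
  -- the three middle derivative computations
  have hFmid : ∀ t ∈ Set.Ioo (u j) (u ⟨(j : ℕ) + 1, hj⟩), (deriv f t) ^ 2 =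
      ((v ⟨(j : ℕ) + 1, hj⟩ - v j) / (2 * d)) ^ 2 := by
    intro t ht
    rw [kl_deriv_eq_on isOpen_Ioo
      (fun s hs => hflin j hj s ⟨hs.1, le_of_lt hs.2⟩) ht, kl_deriv_affine, hAB]
  have hGleft : ∀ t ∈ Set.Ioo (u j) x, (deriv g t) ^ 2 = ((y - v j) / d) ^ 2 := by
    intro t ht
    rw [kl_deriv_eq_on isOpen_Ioo
      (fun s hs => hgleft s ⟨hs.1, le_of_lt hs.2⟩) ht, kl_deriv_affine, hdx]
  have hGright : ∀ t ∈ Set.Ioo x (u ⟨(j : ℕ) + 1, hj⟩),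
      (deriv g t) ^ 2 = ((v ⟨(j : ℕ) + 1, hj⟩ - y) / d) ^ 2 := by
    intro t ht
    rw [kl_deriv_eq_on isOpen_Ioo
      (fun s hs => hgright s ⟨hs.1, le_of_lt hs.2⟩) ht, kl_deriv_affine, hBx]
  -- the outer agreements
  have hout1 : ∀ t ∈ Set.Ioo (0:ℝ) (u j), (deriv g t) ^ 2 = (deriv f t) ^ 2 := by
    intro t ht
    rw [kl_deriv_eq_on (U := Set.Iio (u j)) isOpen_Iio
      (fun s hs => hgout s (fun hc => absurd hs (not_lt.mpr hc.1.le))) ht.2]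
  have hout2 : ∀ t ∈ Set.Ioo (u ⟨(j : ℕ) + 1, hj⟩) (1:ℝ),
      (deriv g t) ^ 2 = (deriv f t) ^ 2 := by
    intro t ht
    rw [kl_deriv_eq_on (U := Set.Ioi (u ⟨(j : ℕ) + 1, hj⟩)) isOpen_Ioi
      (fun s hs => hgout s (fun hc => absurd hs (not_lt.mpr hc.2.le))) ht.1]
  -- integrability pieces
  have hF0A : IntervalIntegrable (fun t => (deriv f t) ^ 2) volume 0 (u j) := by
    rw [intervalIntegrable_iff_integrableOn_Ioc_of_le hA0]
    exact hFint.mono_set (Set.Ioc_subset_Ioc le_rfl (by linarith))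
  have hFAB : IntervalIntegrable (fun t => (deriv f t) ^ 2) volume (u j) (u ⟨(j : ℕ) + 1, hj⟩) :=
    kl_integrable_const hAltB.le hFmid
  have hFB1 : IntervalIntegrable (fun t => (deriv f t) ^ 2) volume (u ⟨(j : ℕ) + 1, hj⟩) 1 := by
    rw [intervalIntegrable_iff_integrableOn_Ioc_of_le hB1]
    exact hFint.mono_set (Set.Ioc_subset_Ioc (by linarith) le_rfl)
  have hG0A : IntervalIntegrable (fun t => (deriv g t) ^ 2) volume 0 (u j) := by
    refine kl_integrable hA0 ?_ hout1
    rw [← intervalIntegrable_iff_integrableOn_Ioc_of_le hA0]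
    exact hF0A
  have hGAx : IntervalIntegrable (fun t => (deriv g t) ^ 2) volume (u j) x :=
    kl_integrable_const hAx.le hGleft
  have hGxB : IntervalIntegrable (fun t => (deriv g t) ^ 2) volume x (u ⟨(j : ℕ) + 1, hj⟩) :=
    kl_integrable_const hxB.le hGright
  have hGB1 : IntervalIntegrable (fun t => (deriv g t) ^ 2) volume (u ⟨(j : ℕ) + 1, hj⟩) 1 := by
    refine kl_integrable hB1 ?_ hout2
    rw [← intervalIntegrable_iff_integrableOn_Ioc_of_le hB1]
    exact hFB1
  -- splitting the integrals
  have e1 : (∫ t in (u j)..x, (deriv g t) ^ 2) + (∫ t in x..(u ⟨(j : ℕ) + 1, hj⟩), (deriv g t) ^ 2)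
      = ∫ t in (u j)..(u ⟨(j : ℕ) + 1, hj⟩), (deriv g t) ^ 2 :=
    intervalIntegral.integral_add_adjacent_intervals hGAx hGxB
  have e2 : (∫ t in (0:ℝ)..(u j), (deriv g t) ^ 2)
        + (∫ t in (u j)..(u ⟨(j : ℕ) + 1, hj⟩), (deriv g t) ^ 2)
      = ∫ t in (0:ℝ)..(u ⟨(j : ℕ) + 1, hj⟩), (deriv g t) ^ 2 :=
    intervalIntegral.integral_add_adjacent_intervals hG0A (hGAx.trans hGxB)
  have e3 : (∫ t in (0:ℝ)..(u ⟨(j : ℕ) + 1, hj⟩), (deriv g t) ^ 2)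
        + (∫ t in (u ⟨(j : ℕ) + 1, hj⟩)..(1:ℝ), (deriv g t) ^ 2)
      = ∫ t in (0:ℝ)..(1:ℝ), (deriv g t) ^ 2 :=
    intervalIntegral.integral_add_adjacent_intervals (hG0A.trans (hGAx.trans hGxB)) hGB1
  have e2' : (∫ t in (0:ℝ)..(u j), (deriv f t) ^ 2)
        + (∫ t in (u j)..(u ⟨(j : ℕ) + 1, hj⟩), (deriv f t) ^ 2)
      = ∫ t in (0:ℝ)..(u ⟨(j : ℕ) + 1, hj⟩), (deriv f t) ^ 2 :=
    intervalIntegral.integral_add_adjacent_intervals hF0A hFAB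
  have e3' : (∫ t in (0:ℝ)..(u ⟨(j : ℕ) + 1, hj⟩), (deriv f t) ^ 2)
        + (∫ t in (u ⟨(j : ℕ) + 1, hj⟩)..(1:ℝ), (deriv f t) ^ 2)
      = ∫ t in (0:ℝ)..(1:ℝ), (deriv f t) ^ 2 :=
    intervalIntegral.integral_add_adjacent_intervals (hF0A.trans hFAB) hFB1
  -- values of the middle integrals
  have vGl : ∫ t in (u j)..x, (deriv g t) ^ 2 = (x - u j) * ((y - v j) / d) ^ 2 :=
    kl_integral_const hAx.le hGleft
  have vGr : ∫ t in x..(u ⟨(j : ℕ) + 1, hj⟩), (deriv g t) ^ 2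
      = (u ⟨(j : ℕ) + 1, hj⟩ - x) * ((v ⟨(j : ℕ) + 1, hj⟩ - y) / d) ^ 2 :=
    kl_integral_const hxB.le hGright
  have vF : ∫ t in (u j)..(u ⟨(j : ℕ) + 1, hj⟩), (deriv f t) ^ 2
      = (u ⟨(j : ℕ) + 1, hj⟩ - u j) * ((v ⟨(j : ℕ) + 1, hj⟩ - v j) / (2 * d)) ^ 2 :=
    kl_integral_const hAltB.le hFmid
  -- outer integrals agree
  have vout1 : ∫ t in (0:ℝ)..(u j), (deriv g t) ^ 2
      = ∫ t in (0:ℝ)..(u j), (deriv f t) ^ 2 :=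
    kl_integral_congr hA0 hout1
  have vout2 : ∫ t in (u ⟨(j : ℕ) + 1, hj⟩)..(1:ℝ), (deriv g t) ^ 2
      = ∫ t in (u ⟨(j : ℕ) + 1, hj⟩)..(1:ℝ), (deriv f t) ^ 2 :=
    kl_integral_congr hB1 hout2
  -- value of f at x
  have hfx : f x = v j + d * (v ⟨(j : ℕ) + 1, hj⟩ - v j) / (2 * d) := by
    rw [hflin j hj x ⟨hAx, hxB.le⟩, hdx, hAB]
  rw [← e3, ← e2, ← e1, ← e3', ← e2', vGl, vGr, vF, vout1, vout2, hfx, hdx, hBx, hAB]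
  field_simp
  ring
end

section
/- For all p > 1, if d_1, ..., d_m ∈ (0, 1] is any sequence such that d_t ≤ min_{s < t} |x_s - x_t| for points x_0, ..., x_m ∈ [0,1] with d_t = min_{s<t}|x_s - x_t|, then ∑_{t=1}^m d_t^p ≤ 1 + 1/(2^p - 2). -/
private lemma ksp_mono_diff {p s : ℝ} (hp : 1 ≤ p) (hs : 0 ≤ s) :
    MonotoneOn (fun y : ℝ => (y + s) ^ p - y ^ p) (Set.Ici 0) := by
  have hderiv : ∀ y : ℝ, HasDerivAt (fun y : ℝ => (y + s) ^ p - y ^ p)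
      (p * (y + s) ^ (p - 1) * 1 - p * y ^ (p - 1)) y := by
    intro y
    exact ((Real.hasDerivAt_rpow_const (Or.inr hp)).comp y
      ((hasDerivAt_id y).add_const s)).sub (Real.hasDerivAt_rpow_const (Or.inr hp))
  apply monotoneOn_of_deriv_nonneg (convex_Ici 0)
  · exact fun y _ => ((hderiv y).continuousAt).continuousWithinAt
  · intro y hy
    exact ((hderiv y).differentiableAt).differentiableWithinAt
  · intro y hy
    rw [interior_Ici] at hy
    rw [(hderiv y).deriv]
    have h1 : y ^ (p - 1) ≤ (y + s) ^ (p - 1) :=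
      Real.rpow_le_rpow (le_of_lt hy) (by linarith) (by linarith)
    have hp0 : 0 < p := by linarith
    nlinarith
private lemma ksp_two_pt {p s y₁ y₂ : ℝ} (hp : 1 ≤ p) (hs : 0 ≤ s) (h1 : 0 ≤ y₁) (h12 : y₁ ≤ y₂) :
    (y₁ + s) ^ p - y₁ ^ p ≤ (y₂ + s) ^ p - y₂ ^ p :=
  ksp_mono_diff hp hs h1 (le_trans h1 h12) h12

-- superadditivity
private lemma ksp_sup {p a b : ℝ} (hp : 1 ≤ p) (ha : 0 ≤ a) (hb : 0 ≤ b) :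
    a ^ p + b ^ p ≤ (a + b) ^ p := by
  have := ksp_two_pt hp ha (le_refl 0) hb
  rw [Real.zero_rpow (by linarith : p ≠ 0)] at this
  simp only [zero_add, sub_zero] at this
  rw [add_comm a b]
  linarith [this]

-- key inequality for interior split
private lemma ksp_key1 {p s g : ℝ} (hp : 1 < p) (hs : 0 ≤ s) (hsg : s ≤ g) :
    ((2:ℝ) ^ p - 2) * min s (g - s) ^ p + s ^ p + (g - s) ^ p ≤ g ^ p := by
  have hp1 : 1 ≤ p := hp.le
  -- core: for 0 ≤ a, a ≤ b, (2^p - 1) * a^p + b^p ≤ (a+b)^p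
  have core : ∀ a b : ℝ, 0 ≤ a → a ≤ b →
      ((2:ℝ) ^ p - 2) * a ^ p + a ^ p + b ^ p ≤ (a + b) ^ p := by
    intro a b ha hab
    have h2 : ((2:ℝ) * a) ^ p = 2 ^ p * a ^ p :=
      Real.mul_rpow (by norm_num) ha
    have := ksp_two_pt hp1 ha ha hab
    -- (a + a)^p - a^p ≤ (b + a)^p - b^p
    have haa : a + a = 2 * a := by ring
    rw [haa, h2, add_comm b a] at this
    linarith
  rcases le_total s (g - s) with h | h
  · have : min s (g - s) = s := min_eq_left h
    rw [this]
    have := core s (g - s) hs h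
    have hg : s + (g - s) = g := by ring
    rw [hg] at this; linarith
  · have : min s (g - s) = g - s := min_eq_right h
    rw [this]
    have hgs : 0 ≤ g - s := by linarith
    have := core (g - s) s hgs h
    have hg : g - s + s = g := by ring
    rw [hg] at this; linarith

private lemma ksp_interior (p : ℝ) (hp : 1 < p) (x d : ℕ → ℝ) :
    ∀ n : ℕ, ∀ T : Finset ℕ, T.card ≤ n → ∀ u v : ℝ, u ≤ v →
    (∀ t ∈ T, x t ∈ Set.Icc u v) →
    (∀ t ∈ T, 0 ≤ d t) →
    (∀ t ∈ T, d t ≤ x t - u) →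
    (∀ t ∈ T, d t ≤ v - x t) →
    (∀ s ∈ T, ∀ t ∈ T, s < t → d t ≤ |x s - x t|) →
    ((2:ℝ) ^ p - 2) * ∑ t ∈ T, d t ^ p ≤ (v - u) ^ p := by
  have h2p : (2:ℝ) < 2 ^ p := by
    nth_rewrite 1 [← Real.rpow_one 2]
    exact Real.rpow_lt_rpow_of_exponent_lt (by norm_num) hp
  intro n
  induction n with
  | zero =>
    intro T hT u v huv _ _ _ _ _
    rw [Finset.card_eq_zero.mp (Nat.le_zero.mp hT)]
    simp only [Finset.sum_empty, mul_zero]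
    exact Real.rpow_nonneg (by linarith) p
  | succ n ih =>
    intro T hT u v huv hmem hd0 hdu hdv hpair
    rcases T.eq_empty_or_nonempty with rfl | hne
    · simp only [Finset.sum_empty, mul_zero]
      exact Real.rpow_nonneg (by linarith) p
    set t₁ := T.min' hne with ht₁def
    have ht₁ : t₁ ∈ T := T.min'_mem hne
    have hlt : ∀ t ∈ T.erase t₁, t₁ < t := fun t ht =>
      lt_of_le_of_ne (T.min'_le t (Finset.mem_of_mem_erase ht))
        (Ne.symm (Finset.ne_of_mem_erase ht))
    set E := T.erase t₁ with hEdef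
    set TL := E.filter (fun t => x t ≤ x t₁) with hTLdef
    set TR := E.filter (fun t => ¬ x t ≤ x t₁) with hTRdef
    have hcard : E.card ≤ n := by
      rw [hEdef, Finset.card_erase_of_mem ht₁]; omega
    have hmemL : ∀ t ∈ TL, t ∈ T ∧ x t ≤ x t₁ ∧ t₁ < t := by
      intro t ht
      rw [hTLdef, Finset.mem_filter] at ht
      exact ⟨Finset.mem_of_mem_erase ht.1, ht.2, hlt t ht.1⟩
    have hmemR : ∀ t ∈ TR, t ∈ T ∧ x t₁ ≤ x t ∧ t₁ < t := by
      intro t ht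
      rw [hTRdef, Finset.mem_filter] at ht
      exact ⟨Finset.mem_of_mem_erase ht.1, (not_le.mp ht.2).le, hlt t ht.1⟩
    have hu1 : u ≤ x t₁ := (hmem t₁ ht₁).1
    have h1v : x t₁ ≤ v := (hmem t₁ ht₁).2
    have hL : ((2:ℝ) ^ p - 2) * ∑ t ∈ TL, d t ^ p ≤ (x t₁ - u) ^ p := by
      apply ih TL (le_trans (Finset.card_filter_le _ _) hcard) u (x t₁) hu1
      · exact fun t ht => ⟨(hmem t (hmemL t ht).1).1, (hmemL t ht).2.1⟩
      · exact fun t ht => hd0 t (hmemL t ht).1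
      · exact fun t ht => hdu t (hmemL t ht).1
      · intro t ht
        have h := hpair t₁ ht₁ t (hmemL t ht).1 (hmemL t ht).2.2
        rwa [abs_of_nonneg (by linarith [(hmemL t ht).2.1])] at h
      · exact fun s hs t ht h => hpair s (hmemL s hs).1 t (hmemL t ht).1 h
    have hR : ((2:ℝ) ^ p - 2) * ∑ t ∈ TR, d t ^ p ≤ (v - x t₁) ^ p := by
      apply ih TR (le_trans (Finset.card_filter_le _ _) hcard) (x t₁) v h1v
      · exact fun t ht => ⟨(hmemR t ht).2.1, (hmem t (hmemR t ht).1).2⟩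
      · exact fun t ht => hd0 t (hmemR t ht).1
      · intro t ht
        have h := hpair t₁ ht₁ t (hmemR t ht).1 (hmemR t ht).2.2
        rwa [abs_of_nonpos (by linarith [(hmemR t ht).2.1]), neg_sub] at h
      · exact fun t ht => hdv t (hmemR t ht).1
      · exact fun s hs t ht h => hpair s (hmemR s hs).1 t (hmemR t ht).1 h
    have hsplit : ∑ t ∈ T, d t ^ p = d t₁ ^ p + (∑ t ∈ TL, d t ^ p + ∑ t ∈ TR, d t ^ p) := by
      rw [hTLdef, hTRdef, Finset.sum_filter_add_sum_filter_not, hEdef]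
      exact (Finset.add_sum_erase T _ ht₁).symm
    have hmin : d t₁ ^ p ≤ min (x t₁ - u) (v - x t₁) ^ p :=
      Real.rpow_le_rpow (hd0 t₁ ht₁) (le_min (hdu t₁ ht₁) (hdv t₁ ht₁)) (by linarith)
    have hk := ksp_key1 (s := x t₁ - u) (g := v - u) hp (by linarith) (by linarith)
    have he : v - u - (x t₁ - u) = v - x t₁ := by ring
    rw [he] at hk
    have hmul : ((2:ℝ) ^ p - 2) * d t₁ ^ p ≤ ((2:ℝ) ^ p - 2) * min (x t₁ - u) (v - x t₁) ^ p :=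
      mul_le_mul_of_nonneg_left hmin (by linarith)
    rw [hsplit]
    nlinarith [hL, hR, hk, hmul]

private lemma ksp_boundary (p : ℝ) (hp : 1 < p) (x d : ℕ → ℝ) :
    ∀ n : ℕ, ∀ T : Finset ℕ, T.card ≤ n → ∀ u v : ℝ, u ≤ v →
    (∀ t ∈ T, x t ∈ Set.Icc u v) →
    (∀ t ∈ T, 0 ≤ d t) →
    (∀ t ∈ T, d t ≤ v - x t) →
    (∀ s ∈ T, ∀ t ∈ T, s < t → d t ≤ |x s - x t|) →
    ((2:ℝ) ^ p - 2) * ∑ t ∈ T, d t ^ p ≤ ((2:ℝ) ^ p - 1) * (v - u) ^ p := by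
  have h2p : (2:ℝ) < 2 ^ p := by
    nth_rewrite 1 [← Real.rpow_one 2]
    exact Real.rpow_lt_rpow_of_exponent_lt (by norm_num) hp
  intro n
  induction n with
  | zero =>
    intro T hT u v huv _ _ _ _
    rw [Finset.card_eq_zero.mp (Nat.le_zero.mp hT)]
    simp only [Finset.sum_empty, mul_zero]
    have := Real.rpow_nonneg (show (0:ℝ) ≤ v - u by linarith) p
    nlinarith
  | succ n ih =>
    intro T hT u v huv hmem hd0 hdv hpair
    rcases T.eq_empty_or_nonempty with rfl | hne
    · simp only [Finset.sum_empty, mul_zero]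
      have := Real.rpow_nonneg (show (0:ℝ) ≤ v - u by linarith) p
      nlinarith
    set t₁ := T.min' hne with ht₁def
    have ht₁ : t₁ ∈ T := T.min'_mem hne
    have hlt : ∀ t ∈ T.erase t₁, t₁ < t := fun t ht =>
      lt_of_le_of_ne (T.min'_le t (Finset.mem_of_mem_erase ht))
        (Ne.symm (Finset.ne_of_mem_erase ht))
    set E := T.erase t₁ with hEdef
    set TL := E.filter (fun t => x t ≤ x t₁) with hTLdef
    set TR := E.filter (fun t => ¬ x t ≤ x t₁) with hTRdef
    have hcard : E.card ≤ n := by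
      rw [hEdef, Finset.card_erase_of_mem ht₁]; omega
    have hmemL : ∀ t ∈ TL, t ∈ T ∧ x t ≤ x t₁ ∧ t₁ < t := by
      intro t ht
      rw [hTLdef, Finset.mem_filter] at ht
      exact ⟨Finset.mem_of_mem_erase ht.1, ht.2, hlt t ht.1⟩
    have hmemR : ∀ t ∈ TR, t ∈ T ∧ x t₁ ≤ x t ∧ t₁ < t := by
      intro t ht
      rw [hTRdef, Finset.mem_filter] at ht
      exact ⟨Finset.mem_of_mem_erase ht.1, (not_le.mp ht.2).le, hlt t ht.1⟩
    have hu1 : u ≤ x t₁ := (hmem t₁ ht₁).1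
    have h1v : x t₁ ≤ v := (hmem t₁ ht₁).2
    -- left part : boundary on [u, x t₁] with point at x t₁
    have hL : ((2:ℝ) ^ p - 2) * ∑ t ∈ TL, d t ^ p ≤ ((2:ℝ) ^ p - 1) * (x t₁ - u) ^ p := by
      apply ih TL (le_trans (Finset.card_filter_le _ _) hcard) u (x t₁) hu1
      · exact fun t ht => ⟨(hmem t (hmemL t ht).1).1, (hmemL t ht).2.1⟩
      · exact fun t ht => hd0 t (hmemL t ht).1
      · intro t ht
        have h := hpair t₁ ht₁ t (hmemL t ht).1 (hmemL t ht).2.2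
        rwa [abs_of_nonneg (by linarith [(hmemL t ht).2.1])] at h
      · exact fun s hs t ht h => hpair s (hmemL s hs).1 t (hmemL t ht).1 h
    -- right part : interior on [x t₁, v]
    have hR : ((2:ℝ) ^ p - 2) * ∑ t ∈ TR, d t ^ p ≤ (v - x t₁) ^ p := by
      apply ksp_interior p hp x d TR.card TR le_rfl (x t₁) v h1v
      · exact fun t ht => ⟨(hmemR t ht).2.1, (hmem t (hmemR t ht).1).2⟩
      · exact fun t ht => hd0 t (hmemR t ht).1
      · intro t ht
        have h := hpair t₁ ht₁ t (hmemR t ht).1 (hmemR t ht).2.2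
        rwa [abs_of_nonpos (by linarith [(hmemR t ht).2.1]), neg_sub] at h
      · exact fun t ht => hdv t (hmemR t ht).1
      · exact fun s hs t ht h => hpair s (hmemR s hs).1 t (hmemR t ht).1 h
    have hsplit : ∑ t ∈ T, d t ^ p = d t₁ ^ p + (∑ t ∈ TL, d t ^ p + ∑ t ∈ TR, d t ^ p) := by
      rw [hTLdef, hTRdef, Finset.sum_filter_add_sum_filter_not, hEdef]
      exact (Finset.add_sum_erase T _ ht₁).symm
    have hd1 : d t₁ ^ p ≤ (v - x t₁) ^ p :=
      Real.rpow_le_rpow (hd0 t₁ ht₁) (hdv t₁ ht₁) (by linarith)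
    have hsup := ksp_sup (a := x t₁ - u) (b := v - x t₁) hp.le (by linarith) (by linarith)
    have he : x t₁ - u + (v - x t₁) = v - u := by ring
    rw [he] at hsup
    rw [hsplit]
    nlinarith [hL, hR, hd1, hsup, Real.rpow_nonneg (show (0:ℝ) ≤ x t₁ - u by linarith) p,
      Real.rpow_nonneg (show (0:ℝ) ≤ v - x t₁ by linarith) p]

theorem stmt19 (p : ℝ) (hp : 1 < p) (m : ℕ) (x : ℕ → ℝ) (d : ℕ → ℝ)
    (hx : ∀ t ≤ m, x t ∈ Set.Icc (0:ℝ) 1)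
    (hd : ∀ t, 1 ≤ t → t ≤ m →
      IsLeast ((fun s => |x s - x t|) '' {s | s < t}) (d t)) :
    ∑ t ∈ Finset.Icc 1 m, d t ^ p ≤ 1 + 1 / ((2:ℝ) ^ p - 2) := by
  have h2p : (2:ℝ) < 2 ^ p := by
    nth_rewrite 1 [← Real.rpow_one 2]
    exact Real.rpow_lt_rpow_of_exponent_lt (by norm_num) hp
  set T := Finset.Icc 1 m with hTdef
  have hmemT : ∀ t ∈ T, 1 ≤ t ∧ t ≤ m := by
    intro t ht; rw [hTdef, Finset.mem_Icc] at ht; exact ht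
  have hd0 : ∀ t ∈ T, 0 ≤ d t := by
    intro t ht
    obtain ⟨s, _, hds⟩ := (hd t (hmemT t ht).1 (hmemT t ht).2).1
    rw [← hds]; positivity
  have hdle : ∀ t ∈ T, ∀ s, s < t → d t ≤ |x s - x t| := by
    intro t ht s hst
    exact (hd t (hmemT t ht).1 (hmemT t ht).2).2 ⟨s, hst, rfl⟩
  have hxm : ∀ t ∈ T, x t ∈ Set.Icc (0:ℝ) 1 := fun t ht => hx t (hmemT t ht).2
  have hx0 := hx 0 (Nat.zero_le m)
  have hd0le : ∀ t ∈ T, d t ≤ |x 0 - x t| := by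
    intro t ht
    exact hdle t ht 0 (lt_of_lt_of_le Nat.zero_lt_one (hmemT t ht).1)
  set TL := T.filter (fun t => x t ≤ x 0) with hTLdef
  set TR := T.filter (fun t => ¬ x t ≤ x 0) with hTRdef
  have hmemL : ∀ t ∈ TL, t ∈ T ∧ x t ≤ x 0 := by
    intro t ht; rw [hTLdef, Finset.mem_filter] at ht; exact ht
  have hmemR : ∀ t ∈ TR, t ∈ T ∧ x 0 ≤ x t := by
    intro t ht; rw [hTRdef, Finset.mem_filter] at ht
    exact ⟨ht.1, (not_le.mp ht.2).le⟩
  have hL : ((2:ℝ) ^ p - 2) * ∑ t ∈ TL, d t ^ p ≤ ((2:ℝ) ^ p - 1) * (x 0 - 0) ^ p := by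
    apply ksp_boundary p hp x d TL.card TL le_rfl 0 (x 0) hx0.1
    · exact fun t ht => ⟨(hxm t (hmemL t ht).1).1, (hmemL t ht).2⟩
    · exact fun t ht => hd0 t (hmemL t ht).1
    · intro t ht
      have h := hd0le t (hmemL t ht).1
      rwa [abs_of_nonneg (by linarith [(hmemL t ht).2])] at h
    · exact fun s hs t ht h => hdle t (hmemL t ht).1 s h
  have hR : ((2:ℝ) ^ p - 2) * ∑ t ∈ TR, d t ^ p ≤ ((2:ℝ) ^ p - 1) * (1 - x 0) ^ p := by
    apply ksp_boundary p hp (fun t => 1 + x 0 - x t) d TR.card TR le_rfl (x 0) 1 hx0.2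
    · intro t ht
      constructor
      · show x 0 ≤ 1 + x 0 - x t; linarith [(hxm t (hmemR t ht).1).2]
      · show 1 + x 0 - x t ≤ 1; linarith [(hmemR t ht).2]
    · exact fun t ht => hd0 t (hmemR t ht).1
    · intro t ht
      have h := hd0le t (hmemR t ht).1
      rw [abs_of_nonpos (by linarith [(hmemR t ht).2]), neg_sub] at h
      show d t ≤ 1 - (1 + x 0 - x t)
      linarith
    · intro s hs t ht hst
      have h := hdle t (hmemR t ht).1 s hst
      have he : (1 + x 0 - x s) - (1 + x 0 - x t) = -(x s - x t) := by ring
      show d t ≤ |(1 + x 0 - x s) - (1 + x 0 - x t)|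
      rw [he, abs_neg]
      exact h
  have hsum : ∑ t ∈ T, d t ^ p = ∑ t ∈ TL, d t ^ p + ∑ t ∈ TR, d t ^ p := by
    rw [hTLdef, hTRdef, Finset.sum_filter_add_sum_filter_not]
  have hsup := ksp_sup (p := p) (a := x 0) (b := 1 - x 0) hp.le hx0.1 (by linarith [hx0.2])
  have he1 : x 0 + (1 - x 0) = (1:ℝ) := by ring
  rw [he1, Real.one_rpow] at hsup
  have hpos : (0:ℝ) < 2 ^ p - 2 := by linarith
  have hgoal : (1:ℝ) + 1 / (2 ^ p - 2) = (2 ^ p - 1) / (2 ^ p - 2) := by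
    field_simp
    ring
  rw [hgoal, le_div_iff₀ hpos]
  rw [sub_zero] at hL
  have hx0p : (0:ℝ) ≤ x 0 ^ p := Real.rpow_nonneg hx0.1 p
  have hx1p : (0:ℝ) ≤ (1 - x 0) ^ p := Real.rpow_nonneg (by linarith [hx0.2]) p
  nlinarith [hL, hR, hsup, hsum]
end
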